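/- Let {T(v)} be a tree representation of a finite simple graph G in which every subtree T(v) is a downward path in the host tree. Then every enumeration v₁,…,vₙ of the vertices with d(𝐯₁) ≥ d(𝐯₂) ≥ … ≥ d(𝐯ₙ) is a strong elimination order of G. -/

import Mathlib

/-!
Write `x ≼ y` (`IsAncestor x y`) when `x` lies on the root path of `y`. Depth is strictly
monotone for `≼`, the ancestors of a node form a chain, and a subtree contains every node lying
`≼`-between two of its nodes. So if a downward path `P` meets a downward path `Q` whose root is no
deeper than that of `P`, then the root of `P` lies in `Q`; and the roots of two downward paths
that both meet a third are `≼`-comparable. For `i < j`, `k < l` with `T(vₖ)` meeting `T(vᵢ)` and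
`T(vⱼ)` and `T(vₗ)` meeting `T(vᵢ)`, these facts place the deeper of the roots of `T(vⱼ)` and
`T(vₗ)` in both paths.
-/

/-- A host tree: a finite tree (connected acyclic simple graph on a nonempty
finite node set) with a distinguished root and positive real edge weights. -/
structure HostTree where
  V : Type
  [fintypeV : Fintype V]
  [nonemptyV : Nonempty V]
  G : SimpleGraph V
  isTree : G.IsTree
  root : V
  w : V → V → ℝ
  w_symm : ∀ x y : V, w x y = w y x
  w_pos : ∀ x y : V, G.Adj x y → 0 < w x y

attribute [instance] HostTree.fintypeV HostTree.nonemptyV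

/-- The unique path in the host tree from the root to a node. -/
noncomputable def HostTree.rootPath (T : HostTree) (x : T.V) : T.G.Walk T.root x :=
  (T.isTree.existsUnique_path T.root x).choose

/-- The depth of a node: the sum of the weights of the edges on the unique
path from the root to the node. -/
noncomputable def HostTree.depth (T : HostTree) (x : T.V) : ℝ :=
  ((T.rootPath x).darts.map (fun d => T.w d.toProd.1 d.toProd.2)).sum

/-- A subtree of the host tree: a nonempty set of nodes inducing a connected
subgraph. -/
def HostTree.IsSubtree (T : HostTree) (S : Set T.V) : Prop :=
  S.Nonempty ∧ (T.G.induce S).Connected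

/-- `S₁` overshadows `S₂`: every node of `S₂ \ S₁` has strictly greater depth
than every node of `S₂ ∩ S₁`. -/
def HostTree.Overshadows (T : HostTree) (S₁ S₂ : Set T.V) : Prop :=
  ∀ x ∈ S₂ \ S₁, ∀ y ∈ S₂ ∩ S₁, T.depth y < T.depth x

/-- Two subtrees are compatible if one overshadows the other. -/
def HostTree.CompatiblePair (T : HostTree) (S₁ S₂ : Set T.V) : Prop :=
  T.Overshadows S₁ S₂ ∨ T.Overshadows S₂ S₁

/-- `x` is the root of the subtree `S`: a node of `S` of minimum depth. -/
def HostTree.IsSubtreeRoot (T : HostTree) (S : Set T.V) (x : T.V) : Prop :=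
  x ∈ S ∧ ∀ y ∈ S, T.depth x ≤ T.depth y

/-- The closed neighbourhood `N[v]` of a vertex. -/
def closedNbhd {α : Type*} (G : SimpleGraph α) (v : α) : Set α :=
  insert v (G.neighborSet v)

/-- A tree representation of `G`: a subtree `t v` of the host tree for every
vertex `v`, such that distinct vertices are adjacent iff their subtrees meet. -/
def IsTreeRep {α : Type*} (G : SimpleGraph α) (T : HostTree) (t : α → Set T.V) : Prop :=
  (∀ v : α, T.IsSubtree (t v)) ∧
  ∀ u v : α, u ≠ v → (G.Adj u v ↔ (t u ∩ t v).Nonempty)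

/-- A compatible tree representation: a tree representation all of whose
subtrees are pairwise compatible. -/
def IsCompatibleTreeRep {α : Type*} (G : SimpleGraph α) (T : HostTree)
    (t : α → Set T.V) : Prop :=
  IsTreeRep G T t ∧ ∀ u v : α, T.CompatiblePair (t u) (t v)

/-- A strong elimination order. -/
def IsStrongElimOrder {α : Type*} (G : SimpleGraph α) {n : ℕ} (σ : Fin n ≃ α) : Prop :=
  ∀ i j k l : Fin n, i < j → k < l →
    σ k ∈ closedNbhd G (σ i) → σ l ∈ closedNbhd G (σ i) →
    σ k ∈ closedNbhd G (σ j) → σ l ∈ closedNbhd G (σ j)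

/-- A downward path in the host tree: a subtree any two of whose nodes are
comparable (one lies on the unique root-path of the other). -/
def HostTree.IsDownwardPath (T : HostTree) (S : Set T.V) : Prop :=
  T.IsSubtree S ∧
  ∀ x ∈ S, ∀ y ∈ S, x ∈ (T.rootPath y).support ∨ y ∈ (T.rootPath x).support

namespace SimpleGraph

variable {V : Type*} {G : SimpleGraph V} {u v : V}

lemma IsAcyclic.support_subset_support_of_isPath (hG : G.IsAcyclic) {p : G.Walk u v}
    (hp : p.IsPath) (q : G.Walk u v) : p.support ⊆ q.support := by
  classical
  have hq : (q.toPath : G.Walk u v) = p :=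
    congrArg Subtype.val ((hG.subsingleton_path u v).elim q.toPath ⟨p, hp⟩)
  exact hq ▸ q.support_toPath_subset_support

lemma Preconnected.exists_walk_support_subset {s : Set V} (hs : (G.induce s).Preconnected)
    (hu : u ∈ s) (hv : v ∈ s) : ∃ p : G.Walk u v, ∀ x ∈ p.support, x ∈ s := by
  obtain ⟨q⟩ := hs ⟨u, hu⟩ ⟨v, hv⟩
  refine ⟨q.map (Embedding.induce s).toHom, fun x hx => ?_⟩
  obtain ⟨y, -, rfl⟩ := List.mem_map.mp (Walk.support_map _ _ ▸ hx)
  exact y.2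

end SimpleGraph

namespace HostTree

open SimpleGraph Walk Classical

variable (T : HostTree)

def weight {u v : T.V} (p : T.G.Walk u v) : ℝ :=
  (p.darts.map fun d => T.w d.toProd.1 d.toProd.2).sum

lemma weight_append {u v x : T.V} (p : T.G.Walk u v) (q : T.G.Walk v x) :
    T.weight (p.append q) = T.weight p + T.weight q := by
  simp only [weight, darts_append, List.map_append, List.sum_append]

lemma weight_pos {u v : T.V} (p : T.G.Walk u v) (huv : u ≠ v) : 0 < T.weight p :=
  List.sum_pos _ (by simpa using fun d _ => T.w_pos _ _ d.adj)
    (by simpa [darts_eq_nil] using not_nil_of_ne huv)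

lemma rootPath_isPath (x : T.V) : (T.rootPath x).IsPath :=
  (T.isTree.existsUnique_path T.root x).choose_spec.1

lemma eq_rootPath {x : T.V} {p : T.G.Walk T.root x} (hp : p.IsPath) : p = T.rootPath x :=
  (T.isTree.existsUnique_path T.root x).choose_spec.2 p hp

def IsAncestor (x y : T.V) : Prop := x ∈ (T.rootPath y).support

variable {T}

lemma IsAncestor.rootPath_eq_takeUntil {x y : T.V} (h : T.IsAncestor x y) :
    T.rootPath x = (T.rootPath y).takeUntil x h :=
  (T.eq_rootPath ((T.rootPath_isPath y).takeUntil h)).symm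

lemma isAncestor_iff_support_prefix {x y : T.V} :
    T.IsAncestor x y ↔ (T.rootPath x).support <+: (T.rootPath y).support := by
  refine ⟨fun h => ?_, fun h => h.subset (end_mem_support _)⟩
  rw [h.rootPath_eq_takeUntil]
  exact support_takeUntil_prefix_support _ h

lemma IsAncestor.trans {x y z : T.V} (hxy : T.IsAncestor x y) (hyz : T.IsAncestor y z) :
    T.IsAncestor x z := by
  rw [isAncestor_iff_support_prefix] at *
  exact hxy.trans hyz

lemma IsAncestor.total {x y z : T.V} (hx : T.IsAncestor x z) (hy : T.IsAncestor y z) :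
    T.IsAncestor x y ∨ T.IsAncestor y x := by
  simp only [isAncestor_iff_support_prefix] at *
  exact List.prefix_or_prefix_of_prefix hx hy

lemma IsAncestor.depth_eq_add {x y : T.V} (h : T.IsAncestor x y) :
    T.depth y = T.depth x + T.weight ((T.rootPath y).dropUntil x h) := by
  change T.weight _ = T.weight _ + _
  rw [h.rootPath_eq_takeUntil, ← weight_append]
  exact congrArg T.weight (take_spec _ h).symm

lemma IsAncestor.depth_lt {x y : T.V} (h : T.IsAncestor x y) (hne : x ≠ y) :
    T.depth x < T.depth y := by
  linarith [h.depth_eq_add, T.weight_pos ((T.rootPath y).dropUntil x h) hne]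

lemma IsAncestor.antisymm {x y : T.V} (hxy : T.IsAncestor x y) (hyx : T.IsAncestor y x) :
    x = y := by
  by_contra hne
  exact (hxy.depth_lt hne).asymm (hyx.depth_lt (Ne.symm hne))

lemma isAncestor_of_depth_le {x y : T.V} (hxy : T.IsAncestor x y ∨ T.IsAncestor y x)
    (hle : T.depth x ≤ T.depth y) : T.IsAncestor x y := by
  rcases hxy with hxy | hyx
  · exact hxy
  obtain rfl | hne := eq_or_ne y x
  · exact hyx
  · exact absurd (hyx.depth_lt hne) hle.not_gt

lemma IsSubtree.mem_of_isAncestor {S : Set T.V} (hS : T.IsSubtree S) {u v w : T.V}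
    (hu : u ∈ S) (hw : w ∈ S) (huv : T.IsAncestor u v) (hvw : T.IsAncestor v w) : v ∈ S := by
  have huw := huv.trans hvw
  have hv : v ∈ ((T.rootPath w).dropUntil u huw).support := by
    have hv : v ∈ (T.rootPath w).support := hvw
    rw [← take_spec _ huw, mem_support_append_iff, ← huw.rootPath_eq_takeUntil] at hv
    rcases hv with hvu | hv
    · rw [IsAncestor.antisymm hvu huv]
      exact start_mem_support _
    · exact hv
  obtain ⟨p, hpS⟩ := hS.2.preconnected.exists_walk_support_subset hu hw
  exact hpS v (T.isTree.isAcyclic.support_subset_support_of_isPath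
    ((T.rootPath_isPath w).dropUntil huw) p hv)

lemma IsDownwardPath.isAncestor_of_isSubtreeRoot {P : Set T.V} (hP : T.IsDownwardPath P)
    {r x : T.V} (hr : T.IsSubtreeRoot P r) (hx : x ∈ P) : T.IsAncestor r x :=
  isAncestor_of_depth_le (hP.2 r hr.1 x hx) (hr.2 x hx)

lemma IsDownwardPath.root_mem_of_inter_nonempty {P Q : Set T.V} (hP : T.IsDownwardPath P)
    (hQ : T.IsDownwardPath Q) {p q : T.V} (hp : T.IsSubtreeRoot P p) (hq : T.IsSubtreeRoot Q q)
    (hPQ : (P ∩ Q).Nonempty) (hqp : T.depth q ≤ T.depth p) : p ∈ Q := by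
  obtain ⟨x, hxP, hxQ⟩ := hPQ
  have hpx := hP.isAncestor_of_isSubtreeRoot hp hxP
  have hqx := hQ.isAncestor_of_isSubtreeRoot hq hxQ
  exact hQ.1.mem_of_isAncestor hq.1 hxQ (isAncestor_of_depth_le (hqx.total hpx) hqp) hpx

lemma IsDownwardPath.isAncestor_of_inter_nonempty {C P Q : Set T.V} (hC : T.IsDownwardPath C)
    (hP : T.IsDownwardPath P) (hQ : T.IsDownwardPath Q) {p q : T.V}
    (hp : T.IsSubtreeRoot P p) (hq : T.IsSubtreeRoot Q q)
    (hCP : (C ∩ P).Nonempty) (hCQ : (C ∩ Q).Nonempty) (hqp : T.depth q ≤ T.depth p) :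
    T.IsAncestor q p := by
  obtain ⟨x, hxC, hxP⟩ := hCP
  obtain ⟨y, hyC, hyQ⟩ := hCQ
  have hpx := hP.isAncestor_of_isSubtreeRoot hp hxP
  have hqy := hQ.isAncestor_of_isSubtreeRoot hq hyQ
  refine isAncestor_of_depth_le ?_ hqp
  rcases hC.2 x hxC y hyC with hxy | hyx
  · exact hqy.total (hpx.trans hxy)
  · exact (hqy.trans hyx).total hpx

lemma IsDownwardPath.inter_nonempty_of_strongElim {I J K L : Set T.V} (hI : T.IsDownwardPath I)
    (hJ : T.IsDownwardPath J) (hK : T.IsDownwardPath K) (hL : T.IsDownwardPath L)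
    {i j k l : T.V} (hi : T.IsSubtreeRoot I i) (hj : T.IsSubtreeRoot J j)
    (hk : T.IsSubtreeRoot K k) (hl : T.IsSubtreeRoot L l)
    (hji : T.depth j ≤ T.depth i) (hlk : T.depth l ≤ T.depth k)
    (hKI : (K ∩ I).Nonempty) (hLI : (L ∩ I).Nonempty) (hKJ : (K ∩ J).Nonempty) :
    (L ∩ J).Nonempty := by
  -- the deeper of the roots `j`, `l` lies in both `J` and `L`
  rcases le_total (T.depth l) (T.depth j) with hlj | hjl
  · have hiL : i ∈ L :=
      hI.root_mem_of_inter_nonempty hL hi hl (Set.inter_comm L I ▸ hLI) (hlj.trans hji)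
    have hj_i : T.IsAncestor j i := hK.isAncestor_of_inter_nonempty hI hJ hi hj hKI hKJ hji
    have hl_i := hL.isAncestor_of_isSubtreeRoot hl hiL
    have hl_j := isAncestor_of_depth_le (hl_i.total hj_i) hlj
    exact ⟨j, hL.1.mem_of_isAncestor hl.1 hiL hl_j hj_i, hj.1⟩
  · have hkJ : k ∈ J := hK.root_mem_of_inter_nonempty hJ hk hj hKJ (hjl.trans hlk)
    have hl_k : T.IsAncestor l k := hI.isAncestor_of_inter_nonempty hK hL hk hl
      (Set.inter_comm K I ▸ hKI) (Set.inter_comm L I ▸ hLI) hlk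
    have hj_k := hJ.isAncestor_of_isSubtreeRoot hj hkJ
    have hj_l := isAncestor_of_depth_le (hj_k.total hl_k) hjl
    exact ⟨l, hl.1, hJ.1.mem_of_isAncestor hj.1 hkJ hj_l hl_k⟩

end HostTree

lemma IsTreeRep.mem_closedNbhd_iff {α : Type*} {G : SimpleGraph α} {T : HostTree}
    {t : α → Set T.V} (h : IsTreeRep G T t) {u v : α} :
    u ∈ closedNbhd G v ↔ (t u ∩ t v).Nonempty := by
  rcases eq_or_ne u v with rfl | huv
  · simpa [closedNbhd] using (h.1 u).1
  · rw [closedNbhd, Set.mem_insert_iff, SimpleGraph.mem_neighborSet, G.adj_comm, ← h.2 u v huv]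
    exact or_iff_right huv

theorem rdv_bottom_up_strongElimOrder_general {α : Type}
    (G : SimpleGraph α) (T : HostTree) (t : α → Set T.V) (h : IsTreeRep G T t)
    (hdp : ∀ v : α, T.IsDownwardPath (t v))
    (rt : α → T.V) (hrt : ∀ v : α, T.IsSubtreeRoot (t v) (rt v))
    {n : ℕ} (σ : Fin n ≃ α)
    (hmono : ∀ i j : Fin n, i ≤ j → T.depth (rt (σ j)) ≤ T.depth (rt (σ i))) :
    IsStrongElimOrder G σ := by
  intro i j k l hij hkl hki hli hkj
  rw [h.mem_closedNbhd_iff] at hki hli hkj ⊢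
  exact (hdp _).inter_nonempty_of_strongElim (hdp _) (hdp _) (hdp _) (hrt _) (hrt _) (hrt _)
    (hrt _) (hmono i j hij.le) (hmono k l hkl.le) hki hli hkj

/-- In a tree representation by downward paths, every enumeration of the
vertices by non-increasing root depth is a strong elimination order. -/
theorem rdv_bottom_up_strongElimOrder {α : Type} [Fintype α]
    (G : SimpleGraph α) (T : HostTree) (t : α → Set T.V) (h : IsTreeRep G T t)
    (hdp : ∀ v : α, T.IsDownwardPath (t v))
    (rt : α → T.V) (hrt : ∀ v : α, T.IsSubtreeRoot (t v) (rt v))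
    {n : ℕ} (σ : Fin n ≃ α)
    (hmono : ∀ i j : Fin n, i ≤ j → T.depth (rt (σ j)) ≤ T.depth (rt (σ i))) :
    IsStrongElimOrder G σ :=
  rdv_bottom_up_strongElimOrder_general G T t h hdp rt hrt σ hmono
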